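/- Let G be a finite connected simple graph of order n ≥ 2 and let p ≥ n be an integer. Then γ(M(G + K̄_p)) = p, where G + K̄_p is the join of G with the edgeless graph on p vertices and γ denotes the domination number. -/

import Mathlib

/-- `S` is a dominating set of the graph `H`. -/
def IsDomSet {V : Type*} (H : SimpleGraph V) (S : Set V) : Prop :=
  ∀ v : V, v ∈ S ∨ ∃ s ∈ S, H.Adj v s

/-- The domination number of a graph `H`. -/
noncomputable def domNum {V : Type*} (H : SimpleGraph V) : ℕ :=
  sInf {k : ℕ | ∃ S : Set V, IsDomSet H S ∧ S.ncard = k}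

/-- The middle graph `M(G)` of a graph `G`: its vertices are the vertices and edges
of `G`; a vertex is adjacent to the edges incident to it, and two edges are adjacent
iff they are distinct and share an endpoint. -/
def middleGraph {V : Type*} (G : SimpleGraph V) : SimpleGraph (V ⊕ G.edgeSet) where
  Adj x y :=
    match x, y with
    | Sum.inl _, Sum.inl _ => False
    | Sum.inl v, Sum.inr e => v ∈ (e : Sym2 V)
    | Sum.inr e, Sum.inl v => v ∈ (e : Sym2 V)
    | Sum.inr e, Sum.inr f => e ≠ f ∧ ∃ v, v ∈ (e : Sym2 V) ∧ v ∈ (f : Sym2 V)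
  symm := by
    constructor
    rintro (v | e) (w | f) h
    · exact h.elim
    · exact h
    · exact h
    · exact ⟨Ne.symm h.1, h.2.imp fun v hv => ⟨hv.2, hv.1⟩⟩
  loopless := by
    constructor
    rintro (v | e) h
    · exact h.elim
    · exact h.1 rfl

/-- The join `G + H` of two graphs. -/
def graphJoin {V W : Type*} (G : SimpleGraph V) (H : SimpleGraph W) :
    SimpleGraph (V ⊕ W) where
  Adj x y :=
    match x, y with
    | Sum.inl a, Sum.inl b => G.Adj a b
    | Sum.inl _, Sum.inr _ => True
    | Sum.inr _, Sum.inl _ => True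
    | Sum.inr a, Sum.inr b => H.Adj a b
  symm := by
    constructor
    rintro (a | a) (b | b) h
    · exact G.adj_symm h
    · trivial
    · trivial
    · exact H.adj_symm h
  loopless := by
    constructor
    rintro (a | a) h
    · exact G.irrefl h
    · exact H.irrefl h

/-! In `M(G + K̄_p)` every vertex `w` of `K̄_p` must be dominated by itself or by an edge at `w`,
and no edge contains two of them, so `γ ≥ p`. Conversely, matching the `n ≤ p` vertices of `G`
injectively into `K̄_p` and taking the `n` matching edges together with the `p - n` unmatched
vertices of `K̄_p` gives `p` elements of `M` such that every vertex of `G + K̄_p` is one of them or lies on one of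
them; since every edge has an endpoint, such a set already dominates all of `M(G + K̄_p)`. -/

section DomNum

variable {V : Type*} {H : SimpleGraph V}

theorem domNum_le_ncard {S : Set V} (hS : IsDomSet H S) : domNum H ≤ S.ncard :=
  Nat.sInf_le ⟨S, hS, rfl⟩

theorem le_domNum {k : ℕ} (h : ∀ S, IsDomSet H S → k ≤ S.ncard) : k ≤ domNum H := by
  have hne : {k : ℕ | ∃ S : Set V, IsDomSet H S ∧ S.ncard = k}.Nonempty :=
    ⟨_, Set.univ, fun v => Or.inl (Set.mem_univ v), rfl⟩
  obtain ⟨S, hS, hcard⟩ := Nat.sInf_mem hne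
  exact (h S hS).trans_eq hcard

end DomNum

section MiddleGraph

variable {α : Type*} {H : SimpleGraph α}

theorem isDomSet_middleGraph_of_forall_vertex {D : Set (α ⊕ H.edgeSet)}
    (hD : ∀ u, Sum.inl u ∈ D ∨ ∃ e : H.edgeSet, u ∈ (e : Sym2 α) ∧ Sum.inr e ∈ D) :
    IsDomSet (middleGraph H) D := by
  rintro (u | e)
  · rcases hD u with hu | ⟨e, hue, he⟩
    · exact Or.inl hu
    · exact Or.inr ⟨_, he, hue⟩
  · obtain ⟨u, hu⟩ : ∃ u, u ∈ (e : Sym2 α) := ⟨_, Sym2.out_fst_mem _⟩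
    rcases hD u with hD | ⟨f, huf, hf⟩
    · exact Or.inr ⟨_, hD, hu⟩
    · by_cases hef : e = f
      · exact Or.inl (hef ▸ hf)
      · exact Or.inr ⟨_, hf, hef, u, hu, huf⟩

theorem eq_or_adj_of_middleGraph_dominates {u u' : α} {x : α ⊕ H.edgeSet}
    (hu : x = Sum.inl u ∨ (middleGraph H).Adj (Sum.inl u) x)
    (hu' : x = Sum.inl u' ∨ (middleGraph H).Adj (Sum.inl u') x) :
    u = u' ∨ H.Adj u u' := by
  rcases x with y | ⟨e, he⟩
  · obtain rfl : y = u := by rcases hu with h | h; exacts [Sum.inl.inj h, h.elim]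
    obtain rfl : y = u' := by rcases hu' with h | h; exacts [Sum.inl.inj h, h.elim]
    exact Or.inl rfl
  · replace hu : u ∈ e := by rcases hu with h | h; exacts [(Sum.inr_ne_inl h).elim, h]
    replace hu' : u' ∈ e := by rcases hu' with h | h; exacts [(Sum.inr_ne_inl h).elim, h]
    by_cases huu' : u = u'
    · exact Or.inl huu'
    · rw [(Sym2.mem_and_mem_iff huu').1 ⟨hu, hu'⟩, SimpleGraph.mem_edgeSet] at he
      exact Or.inr he

theorem SimpleGraph.IsIndepSet.ncard_le_of_isDomSet_middleGraph {I : Set α}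
    (hI : H.IsIndepSet I) {D : Set (α ⊕ H.edgeSet)} (hD : IsDomSet (middleGraph H) D)
    (hfin : D.Finite) : I.ncard ≤ D.ncard := by
  have hdom : ∀ u, ∃ x ∈ D, x = Sum.inl u ∨ (middleGraph H).Adj (Sum.inl u) x := fun u =>
    (hD (Sum.inl u)).elim (fun h => ⟨_, h, Or.inl rfl⟩) fun ⟨x, hx, hadj⟩ => ⟨x, hx, Or.inr hadj⟩
  choose f hfD hf using hdom
  refine Set.ncard_le_ncard_of_injOn f (fun u _ => hfD u) ?_ hfin
  intro u hu u' hu' hfu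
  exact (eq_or_adj_of_middleGraph_dominates (hf u) (hfu ▸ hf u')).resolve_right
    fun hadj => hI hu hu' (H.ne_of_adj hadj) hadj

end MiddleGraph

section Join

variable {V W : Type*}

theorem isIndepSet_range_inr_graphJoin_bot (G : SimpleGraph V) :
    (graphJoin G (⊥ : SimpleGraph W)).IsIndepSet (Set.range Sum.inr) := by
  rintro _ ⟨w, rfl⟩ _ ⟨w', rfl⟩ - hadj
  exact hadj

theorem le_domNum_middleGraph_graphJoin_bot [Finite V] [Finite W] (G : SimpleGraph V) :
    Nat.card W ≤ domNum (middleGraph (graphJoin G (⊥ : SimpleGraph W))) :=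
  le_domNum fun _ hD => Set.ncard_range_of_injective Sum.inr_injective ▸
    (isIndepSet_range_inr_graphJoin_bot G).ncard_le_of_isDomSet_middleGraph hD (Set.toFinite _)

theorem domNum_middleGraph_graphJoin_le (G : SimpleGraph V) (K : SimpleGraph W) (g : V ↪ W) :
    domNum (middleGraph (graphJoin G K)) ≤ Nat.card W := by
  have hcross (v : V) (w : W) : s(Sum.inl v, Sum.inr w) ∈ (graphJoin G K).edgeSet := trivial
  let F (w : W) : (V ⊕ W) ⊕ (graphJoin G K).edgeSet :=
    match Function.partialInv g w with
    | some v => Sum.inr ⟨s(Sum.inl v, Sum.inr w), hcross v w⟩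
    | none => Sum.inl (Sum.inr w)
  have hF_edge (w : W) : Sum.inl (Sum.inr w) ∈ Set.range F ∨
      ∃ e : (graphJoin G K).edgeSet, Sum.inr w ∈ (e : Sym2 (V ⊕ W)) ∧ Sum.inr e ∈ Set.range F := by
    rcases h : Function.partialInv g w with _ | v
    · exact Or.inl ⟨w, by simp only [F, h]⟩
    · exact Or.inr ⟨⟨_, hcross v w⟩, Sym2.mem_mk_right _ _, w, by simp only [F, h]⟩
  have hF_inj : Function.Injective F := by
    intro w w' hww'
    simp only [F] at hww'
    split at hww' <;> split at hww' <;> simp_all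
  have hdom : IsDomSet (middleGraph (graphJoin G K)) (Set.range F) := by
    refine isDomSet_middleGraph_of_forall_vertex ?_
    rintro (v | w)
    · refine Or.inr ⟨⟨_, hcross v (g v)⟩, Sym2.mem_mk_left _ _, g v, ?_⟩
      simp only [F, Function.partialInv_left g.injective]
    · exact hF_edge w
  exact (domNum_le_ncard hdom).trans (Set.ncard_range_of_injective hF_inj).le

end Join

theorem domNum_middle_join_big_general {V : Type*} [Fintype V] (G : SimpleGraph V) (n p : ℕ)
    (hord : Fintype.card V = n) (hp : n ≤ p) :
    domNum (middleGraph (graphJoin G (⊥ : SimpleGraph (Fin p)))) = p := by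
  obtain ⟨g⟩ : Nonempty (V ↪ Fin p) :=
    Function.Embedding.nonempty_of_card_le (by rwa [hord, Fintype.card_fin])
  have hupper := domNum_middleGraph_graphJoin_le G ⊥ g
  have hlower := le_domNum_middleGraph_graphJoin_bot (W := Fin p) G
  rw [Nat.card_eq_fintype_card, Fintype.card_fin] at hupper hlower
  exact le_antisymm hupper hlower

/-- For a connected graph `G` of order `n ≥ 2` and `p ≥ n`,
`γ(M(G + K̄_p)) = p`. -/
theorem domNum_middle_join_big {V : Type*} [Fintype V] (G : SimpleGraph V) (n p : ℕ)
    (hord : Fintype.card V = n) (hn : 2 ≤ n) (hconn : G.Connected) (hp : n ≤ p) :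
    domNum (middleGraph (graphJoin G (⊥ : SimpleGraph (Fin p)))) = p :=
  domNum_middle_join_big_general G n p hord hp
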